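/- (Bernstein) Let α ∈ (0,1) and let f : ℝ → ℝ be 2π-periodic and satisfy |f(x) − f(y)| ≤ M·|x − y|^α for all x, y and some M ≥ 0. Then there is a constant C depending only on α such that for all n ∈ ℕ, sup_{x∈ℝ} |f(x) − σ_n(f;x)| ≤ C·M·n^{−α}, where σ_n(f) = (1/(n+1)) Σ_{k=0}^n S_k(f) is the n-th Fejér mean and S_k(f) is the k-th partial sum of the Fourier series of f. -/

import Mathlib

open Real

/-- The `j`-th Fourier coefficient `f̂_j = (1/2π)∫_{−π}^{π} f(t) e^{−ijt} dt`. -/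
noncomputable def fourierCoef (f : ℝ → ℝ) (j : ℤ) : ℂ :=
  (1 / (2 * Real.pi)) * ∫ t in (-Real.pi)..Real.pi,
    (f t : ℂ) * Complex.exp (-(Complex.I * (j : ℂ) * (t : ℂ)))

/-- The `k`-th partial Fourier sum `S_k(f;x) = Σ_{|j|≤k} f̂_j e^{ijx}`. -/
noncomputable def fourierPartialSum (k : ℕ) (f : ℝ → ℝ) (x : ℝ) : ℂ :=
  ∑ j ∈ Finset.Icc (-(k : ℤ)) (k : ℤ),
    fourierCoef f j * Complex.exp (Complex.I * (j : ℂ) * (x : ℂ))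

/-- The `n`-th Fejér mean `σ_n(f) = (1/(n+1)) Σ_{k=0}^n S_k(f)`. -/
noncomputable def fejerMean (n : ℕ) (f : ℝ → ℝ) (x : ℝ) : ℂ :=
  (1 / (n + 1 : ℂ)) * ∑ k ∈ Finset.range (n + 1), fourierPartialSum k f x

/-!
The Fejér mean is the convolution `σ_n f(x) = (1/2π) ∫_{-π}^{π} f(x - t) K_n(t) dt` with the
Fejér kernel `K_n(t) = |∑_{k=0}^n e^{ikt}|² / (n + 1)`, the Cesàro mean of the Dirichlet kernels.
`K_n` is nonnegative with total mass `2π`, so `|f(x) - σ_n f(x)| ≤ (M/2π) ∫ |t|^α K_n(t) dt`.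
On `|t| ≤ 1/(n+1)` use `K_n ≤ n + 1`; on `1/(n+1) ≤ |t| ≤ π` use `K_n(t) ≤ π² / ((n+1) t²)`,
which comes from `|e^{it} - 1| ≥ 2|t|/π`. Both pieces are `O((n+1)^{-α})`, the second because
`α < 1` makes `∫_δ^π t^{α-2} dt ≤ δ^{α-1}/(1-α)` for `δ = 1/(n+1)`.
-/

open Complex Finset MeasureTheory

noncomputable def expI (j : ℤ) (t : ℝ) : ℂ := Complex.exp (Complex.I * j * t)

lemma expI_add (j k : ℤ) (t : ℝ) : expI (j + k) t = expI j t * expI k t := by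
  rw [expI, expI, expI, ← Complex.exp_add]; push_cast; ring_nf

lemma expI_natCast (k : ℕ) (t : ℝ) : expI k t = expI 1 t ^ k := by
  rw [expI, expI, ← Complex.exp_nat_mul]; push_cast; ring_nf

lemma conj_expI (j : ℤ) (t : ℝ) : (starRingEnd ℂ) (expI j t) = expI (-j) t := by
  rw [expI, expI, ← Complex.exp_conj]; simp

lemma expI_neg_right (j : ℤ) (t : ℝ) : expI j (-t) = expI (-j) t := by
  rw [expI, expI]; push_cast; ring_nf

lemma expI_periodic (j : ℤ) : Function.Periodic (expI j) (2 * π) := fun t => by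
  rw [expI, expI, ofReal_add, mul_add, Complex.exp_add]
  push_cast
  rw [show I * j * (2 * π) = j * (2 * π * I) by ring, exp_int_mul_two_pi_mul_I, mul_one]

lemma norm_expI (j : ℤ) (t : ℝ) : ‖expI j t‖ = 1 := by
  rw [expI, Complex.norm_exp]; simp

@[fun_prop]
lemma continuous_expI (j : ℤ) : Continuous (expI j) := by
  unfold expI; fun_prop

lemma integral_expI_of_ne_zero {j : ℤ} (hj : j ≠ 0) : ∫ t in (-π)..π, expI j t = 0 := by
  have hc : I * j ≠ 0 := mul_ne_zero I_ne_zero (Int.cast_ne_zero.2 hj)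
  simp only [expI]
  rw [integral_exp_mul_complex hc, div_eq_zero_iff, sub_eq_zero]
  left
  rw [show I * j * ((π : ℝ) : ℂ) = I * j * ((-π : ℝ) : ℂ) + j * (2 * π * I) by push_cast; ring,
    Complex.exp_add, Complex.exp_int_mul_two_pi_mul_I, mul_one]

noncomputable def dirichletKernel (k : ℕ) (t : ℝ) : ℂ := ∑ j ∈ Icc (-(k : ℤ)) k, expI j t

noncomputable def expSum (n : ℕ) (t : ℝ) : ℂ := ∑ k ∈ range (n + 1), expI k t

noncomputable def fejerKernel (n : ℕ) (t : ℝ) : ℝ := normSq (expSum n t) / (n + 1)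

@[fun_prop]
lemma continuous_dirichletKernel (k : ℕ) : Continuous (dirichletKernel k) :=
  continuous_finsetSum _ fun j _ => continuous_expI j

@[fun_prop]
lemma continuous_fejerKernel (n : ℕ) : Continuous (fejerKernel n) := by
  unfold fejerKernel expSum; fun_prop

lemma integral_dirichletKernel (k : ℕ) : ∫ t in (-π)..π, dirichletKernel k t = 2 * π := by
  simp only [dirichletKernel]
  rw [intervalIntegral.integral_finsetSum fun j _ => (continuous_expI j).intervalIntegrable _ _,
    sum_eq_single_of_mem 0 (by simp) fun j _ hj => integral_expI_of_ne_zero hj]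
  simp only [expI, Int.cast_zero, mul_zero, zero_mul, Complex.exp_zero,
    intervalIntegral.integral_const, sub_neg_eq_add, real_smul, mul_one]
  push_cast
  ring

/-- Both sides count `e^{ijt}` with multiplicity `n + 1 - |j|`: the term `(a, b)` of
`|∑_{a ≤ n} e^{iat}|² = ∑_{a, b ≤ n} e^{i(a-b)t}` is matched with the term `(max a b, a - b)`. -/
lemma sum_dirichletKernel (n : ℕ) (t : ℝ) :
    ∑ k ∈ range (n + 1), dirichletKernel k t = normSq (expSum n t) := by
  rw [← mul_conj, expSum, map_sum, sum_mul_sum, ← sum_product']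
  simp_rw [conj_expI, ← expI_add, dirichletKernel]
  rw [sum_sigma']
  refine sum_nbij' (fun p => ((p.1 + min p.2 0 : ℤ).toNat, (p.1 - max p.2 0 : ℤ).toNat))
    (fun q => ⟨max q.1 q.2, (q.1 : ℤ) - q.2⟩) ?_ ?_ ?_ ?_ ?_
  · rintro ⟨k, j⟩ h
    simp only [mem_sigma, mem_range, mem_Icc, mem_product] at h ⊢
    omega
  · rintro ⟨a, b⟩ h
    simp only [mem_sigma, mem_range, mem_Icc, mem_product] at h ⊢
    omega
  · rintro ⟨k, j⟩ h
    simp only [mem_sigma, mem_range, mem_Icc] at h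
    simp only [Sigma.mk.injEq, heq_eq_eq]
    omega
  · rintro ⟨a, b⟩ -
    simp only [Prod.mk.injEq]
    omega
  · rintro ⟨k, j⟩ h
    simp only [mem_sigma, mem_range, mem_Icc] at h
    congr 1
    dsimp only
    omega

lemma fejerKernel_eq_average_dirichletKernel (n : ℕ) (t : ℝ) :
    (fejerKernel n t : ℂ) = (∑ k ∈ range (n + 1), dirichletKernel k t) / (n + 1) := by
  rw [sum_dirichletKernel, fejerKernel]
  push_cast
  ring

lemma integral_fejerKernel (n : ℕ) : ∫ t in (-π)..π, fejerKernel n t = 2 * π := by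
  apply Complex.ofReal_injective
  rw [← intervalIntegral.integral_ofReal]
  simp_rw [fejerKernel_eq_average_dirichletKernel]
  rw [intervalIntegral.integral_div, intervalIntegral.integral_finsetSum
    fun k _ => (continuous_dirichletKernel k).intervalIntegrable _ _]
  simp_rw [integral_dirichletKernel]
  field_simp
  simp

lemma fejerKernel_nonneg (n : ℕ) (t : ℝ) : 0 ≤ fejerKernel n t :=
  div_nonneg (normSq_nonneg _) (by positivity)

lemma fejerKernel_neg (n : ℕ) (t : ℝ) : fejerKernel n (-t) = fejerKernel n t := by
  have h : expSum n (-t) = (starRingEnd ℂ) (expSum n t) := by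
    simp_rw [expSum, map_sum, expI_neg_right, conj_expI]
  rw [fejerKernel, fejerKernel, h, normSq_conj]

lemma fejerKernel_periodic (n : ℕ) : Function.Periodic (fejerKernel n) (2 * π) := fun t => by
  simp only [fejerKernel, expSum, expI_periodic _ t]

lemma norm_expSum_le (n : ℕ) (t : ℝ) : ‖expSum n t‖ ≤ n + 1 :=
  (norm_sum_le _ _).trans (by simp [norm_expI])

lemma expSum_mul_expI_one_sub_one (n : ℕ) (t : ℝ) :
    expSum n t * (expI 1 t - 1) = expI 1 t ^ (n + 1) - 1 := by
  simp_rw [expSum, expI_natCast]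
  exact geom_sum_mul _ _

lemma norm_expSum_le_pi_div {t : ℝ} (ht₀ : t ≠ 0) (ht : |t| ≤ π) (n : ℕ) :
    ‖expSum n t‖ ≤ π / |t| := by
  have hlower : 2 * |t| / π ≤ ‖expI 1 t - 1‖ := by
    have hsin := mul_abs_le_abs_sin (x := t / 2) (by rw [abs_div, abs_two]; linarith)
    rw [abs_div, abs_two] at hsin
    rw [expI, Int.cast_one, mul_one, norm_exp_I_mul_ofReal_sub_one, norm_mul, Real.norm_eq_abs,
      Real.norm_eq_abs, abs_two]
    calc 2 * |t| / π = 2 * (2 / π * (|t| / 2)) := by ring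
      _ ≤ _ := by gcongr
  have hupper : ‖expSum n t‖ * ‖expI 1 t - 1‖ ≤ 2 := by
    rw [← norm_mul, expSum_mul_expI_one_sub_one]
    refine (norm_sub_le _ _).trans ?_
    rw [norm_pow, norm_expI, one_pow, norm_one]; norm_num
  have hmul : ‖expSum n t‖ * (2 * |t| / π) ≤ 2 :=
    (mul_le_mul_of_nonneg_left hlower (norm_nonneg _)).trans hupper
  rw [le_div_iff₀ (abs_pos.2 ht₀)]
  calc ‖expSum n t‖ * |t| = π / 2 * (‖expSum n t‖ * (2 * |t| / π)) := by field_simp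
    _ ≤ π / 2 * 2 := by gcongr
    _ = π := by ring

lemma fejerKernel_le (n : ℕ) (t : ℝ) : fejerKernel n t ≤ n + 1 := by
  rw [fejerKernel, div_le_iff₀ (by positivity), normSq_eq_norm_sq, ← sq]
  gcongr
  exact norm_expSum_le n t

lemma fejerKernel_le_div_sq {t : ℝ} (ht₀ : t ≠ 0) (ht : |t| ≤ π) (n : ℕ) :
    fejerKernel n t ≤ π ^ 2 / ((n + 1) * t ^ 2) := by
  rw [fejerKernel, normSq_eq_norm_sq, div_le_div_iff₀ (by positivity) (by positivity),
    ← sq_abs t]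
  calc ‖expSum n t‖ ^ 2 * ((n + 1) * |t| ^ 2) = (‖expSum n t‖ * |t|) ^ 2 * (n + 1) := by ring
    _ ≤ π ^ 2 * (n + 1) := by
      gcongr
      exact (le_div_iff₀ (abs_pos.2 ht₀)).1 (norm_expSum_le_pi_div ht₀ ht n)

section Representation

variable {f : ℝ → ℝ}

lemma IntervalIntegrable.ofReal_mul_continuous {a b : ℝ} (hf : IntervalIntegrable f volume a b)
    {g : ℝ → ℂ} (hg : Continuous g) : IntervalIntegrable (fun t => (f t : ℂ) * g t) volume a b :=
  IntervalIntegrable.mul_continuousOn ⟨hf.1.ofReal, hf.2.ofReal⟩ hg.continuousOn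

lemma fourierCoef_mul_expI (f : ℝ → ℝ) (j : ℤ) (x : ℝ) :
    fourierCoef f j * expI j x = 1 / (2 * π) * ∫ t in (-π)..π, f t * expI j (x - t) := by
  rw [fourierCoef, mul_assoc, ← intervalIntegral.integral_mul_const]
  congr 1
  refine intervalIntegral.integral_congr fun t _ => ?_
  rw [mul_assoc, expI, expI, ← Complex.exp_add]
  push_cast
  ring_nf

lemma fourierPartialSum_eq_integral (hf : IntervalIntegrable f volume (-π) π) (k : ℕ) (x : ℝ) :
    fourierPartialSum k f x
      = 1 / (2 * π) * ∫ t in (-π)..π, f t * dirichletKernel k (x - t) := by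
  rw [fourierPartialSum]
  simp_rw [← expI.eq_1, fourierCoef_mul_expI]
  rw [← mul_sum, ← intervalIntegral.integral_finsetSum fun j _ =>
    hf.ofReal_mul_continuous (by fun_prop : Continuous fun t => expI j (x - t))]
  simp_rw [dirichletKernel, mul_sum]

lemma fejerMean_eq_integral (hf : IntervalIntegrable f volume (-π) π) (n : ℕ) (x : ℝ) :
    fejerMean n f x = 1 / (2 * π) * ∫ t in (-π)..π, (f t : ℂ) * fejerKernel n (x - t) := by
  rw [fejerMean]
  simp_rw [fourierPartialSum_eq_integral hf]
  rw [← mul_sum, ← intervalIntegral.integral_finsetSum fun k _ =>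
    hf.ofReal_mul_continuous (by fun_prop : Continuous fun t => dirichletKernel k (x - t))]
  simp_rw [fejerKernel_eq_average_dirichletKernel, mul_div_assoc', intervalIntegral.integral_div,
    mul_sum]
  ring

lemma fejerMean_eq_integral_comp_sub (hf : IntervalIntegrable f volume (-π) π)
    (hper : Function.Periodic f (2 * π)) (n : ℕ) (x : ℝ) :
    fejerMean n f x = ↑(1 / (2 * π) * ∫ t in (-π)..π, f (x - t) * fejerKernel n t) := by
  set g : ℝ → ℝ := fun s => f s * fejerKernel n (x - s)
  have hg : Function.Periodic g (2 * π) := fun s => by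
    simp only [g, hper s, sub_add_eq_sub_sub, (fejerKernel_periodic n).sub_eq]
  have hshift : ∫ t in (-π)..π, f (x - t) * fejerKernel n t = ∫ s in (-π)..π, g s := by
    calc ∫ t in (-π)..π, f (x - t) * fejerKernel n t = ∫ t in (-π)..π, g (x - t) := by
          simp only [g, sub_sub_cancel]
      _ = ∫ s in (x - π)..(x - π) + 2 * π, g s := by
          rw [intervalIntegral.integral_comp_sub_left]; ring_nf
      _ = ∫ s in (-π)..π, g s := by rw [hg.intervalIntegral_add_eq (x - π) (-π)]; ring_nf
  rw [fejerMean_eq_integral hf, hshift, ofReal_mul, ← intervalIntegral.integral_ofReal]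
  simp only [g, ofReal_mul, ofReal_div, ofReal_one, ofReal_ofNat]

lemma sub_fejerMean_eq (hf : IntervalIntegrable f volume (-π) π)
    (hper : Function.Periodic f (2 * π)) (n : ℕ) (x : ℝ) :
    (f x : ℂ) - fejerMean n f x
      = ↑(1 / (2 * π) * ∫ t in (-π)..π, (f x - f (x - t)) * fejerKernel n t) := by
  have hfx : IntervalIntegrable (fun t => f (x - t)) volume (-π) π := by
    have h := hper.intervalIntegrable two_pi_pos.ne' (t := -π) (by ring_nf; exact hf)
      (x - π) (x + π)
    simpa using (h.comp_sub_left x).symm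
  simp_rw [sub_mul]
  rw [fejerMean_eq_integral_comp_sub hf hper, intervalIntegral.integral_sub
    (((continuous_fejerKernel n).intervalIntegrable _ _).const_mul _)
    (hfx.mul_continuousOn (continuous_fejerKernel n).continuousOn),
    intervalIntegral.integral_const_mul, integral_fejerKernel]
  push_cast
  field_simp

lemma norm_sub_fejerMean_le (hf : IntervalIntegrable f volume (-π) π)
    (hper : Function.Periodic f (2 * π)) (n : ℕ) (x : ℝ) :
    ‖(f x : ℂ) - fejerMean n f x‖
      ≤ 1 / (2 * π) * ∫ t in (-π)..π, |f x - f (x - t)| * fejerKernel n t := by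
  rw [sub_fejerMean_eq hf hper, norm_real, Real.norm_eq_abs, abs_mul,
    abs_of_pos (by positivity : 0 < 1 / (2 * π))]
  gcongr
  refine (intervalIntegral.abs_integral_le_integral_abs (by linarith [pi_pos])).trans_eq ?_
  simp only [abs_mul, abs_of_nonneg (fejerKernel_nonneg n _)]

end Representation

section Moment

lemma integral_neg_self_eq_two_mul_of_even {h : ℝ → ℝ} (heven : ∀ t, h (-t) = h t) {a : ℝ}
    (hint : IntervalIntegrable h volume (-a) a) :
    ∫ t in (-a)..a, h t = 2 * ∫ t in 0..a, h t := by
  have hzero : (0 : ℝ) ∈ Set.uIcc (-a) a := by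
    rcases le_total 0 a with ha | ha
    · exact Set.mem_uIcc.2 (Or.inl ⟨by linarith, ha⟩)
    · exact Set.mem_uIcc.2 (Or.inr ⟨ha, by linarith⟩)
  have hleft : ∫ t in (-a)..0, h t = ∫ t in 0..a, h t := by
    have hneg := intervalIntegral.integral_comp_neg (a := 0) (b := a) h
    rw [neg_zero] at hneg
    simp only [← hneg, heven]
  rw [← intervalIntegral.integral_add_adjacent_intervals
    (hint.mono_set (Set.uIcc_subset_uIcc_left hzero))
    (hint.mono_set (Set.uIcc_subset_uIcc_right hzero)), hleft, two_mul]

variable {α : ℝ} (n : ℕ)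

lemma integral_rpow_mul_fejerKernel_near_zero_le (hα : 0 ≤ α) :
    ∫ t in (0)..((n : ℝ) + 1)⁻¹, t ^ α * fejerKernel n t ≤ ((n : ℝ) + 1) ^ (-α) := by
  set δ : ℝ := ((n : ℝ) + 1)⁻¹
  have hδ : 0 < δ := by positivity
  have hbound : ∀ t ∈ Set.Icc 0 δ, t ^ α * fejerKernel n t ≤ δ ^ α * (n + 1) := fun t ht =>
    mul_le_mul (Real.rpow_le_rpow ht.1 ht.2 hα) (fejerKernel_le n t) (fejerKernel_nonneg n t)
      (by positivity)
  calc ∫ t in (0)..δ, t ^ α * fejerKernel n t ≤ ∫ _ in (0)..δ, δ ^ α * (n + 1) :=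
        intervalIntegral.integral_mono_on hδ.le
          (((Real.continuous_rpow_const hα).mul (continuous_fejerKernel n)).intervalIntegrable _ _)
          intervalIntegrable_const hbound
    _ = δ ^ α * (δ * (n + 1)) := by rw [intervalIntegral.integral_const, smul_eq_mul]; ring
    _ = ((n : ℝ) + 1) ^ (-α) := by
      rw [inv_mul_cancel₀ (by positivity), mul_one, Real.inv_rpow (by positivity),
        Real.rpow_neg (by positivity)]

lemma integral_rpow_mul_fejerKernel_away_from_zero_le (hα : α < 1) :
    ∫ t in ((n : ℝ) + 1)⁻¹..π, t ^ α * fejerKernel n t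
      ≤ π ^ 2 / (1 - α) * ((n : ℝ) + 1) ^ (-α) := by
  set δ : ℝ := ((n : ℝ) + 1)⁻¹
  have hδ : 0 < δ := by positivity
  have hδπ : δ ≤ π := (inv_le_one_of_one_le₀ (by simp)).trans (by linarith [pi_gt_three])
  have hδ0 : (0 : ℝ) ∉ Set.uIcc δ π := fun h0 => by
    rw [Set.uIcc_of_le hδπ] at h0; exact hδ.not_ge h0.1
  have hbound : ∀ t ∈ Set.Icc δ π,
      t ^ α * fejerKernel n t ≤ π ^ 2 / (n + 1) * t ^ (α - 2) := fun t ht => by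
    have ht₀ : 0 < t := hδ.trans_le ht.1
    calc t ^ α * fejerKernel n t ≤ t ^ α * (π ^ 2 / ((n + 1) * t ^ 2)) := by
          gcongr
          exact fejerKernel_le_div_sq ht₀.ne' (by rw [abs_of_pos ht₀]; exact ht.2) n
      _ = π ^ 2 / (n + 1) * t ^ (α - 2) := by
          rw [Real.rpow_sub ht₀, Real.rpow_two]; field_simp
  have hint : ∫ t in δ..π, t ^ (α - 2) = (δ ^ (α - 1) - π ^ (α - 1)) / (1 - α) := by
    rw [integral_rpow (Or.inr ⟨by linarith, hδ0⟩), show α - 2 + 1 = α - 1 by ring,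
      div_eq_div_iff (by linarith) (by linarith)]
    ring
  calc ∫ t in δ..π, t ^ α * fejerKernel n t ≤ ∫ t in δ..π, π ^ 2 / (n + 1) * t ^ (α - 2) :=
        intervalIntegral.integral_mono_on hδπ
          ((intervalIntegral.intervalIntegrable_rpow (Or.inr hδ0)).mul_continuousOn
            (continuous_fejerKernel n).continuousOn)
          ((intervalIntegral.intervalIntegrable_rpow (Or.inr hδ0)).const_mul _) hbound
    _ = π ^ 2 / (n + 1) * ((δ ^ (α - 1) - π ^ (α - 1)) / (1 - α)) := by
        rw [intervalIntegral.integral_const_mul, hint]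
    _ ≤ π ^ 2 / (n + 1) * (δ ^ (α - 1) / (1 - α)) := by
        gcongr
        linarith [Real.rpow_pos_of_pos pi_pos (α - 1)]
    _ = π ^ 2 / (1 - α) * ((n : ℝ) + 1) ^ (-α) := by
        rw [Real.inv_rpow (by positivity), ← Real.rpow_neg (by positivity), neg_sub,
          sub_eq_add_neg, Real.rpow_add (by positivity), Real.rpow_one]
        field_simp

lemma integral_abs_rpow_mul_fejerKernel_le (hα₀ : 0 ≤ α) (hα₁ : α < 1) :
    ∫ t in (-π)..π, |t| ^ α * fejerKernel n t
      ≤ 2 * (1 + π ^ 2 / (1 - α)) * ((n : ℝ) + 1) ^ (-α) := by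
  have hcont : Continuous fun t => t ^ α * fejerKernel n t :=
    (Real.continuous_rpow_const hα₀).mul (continuous_fejerKernel n)
  have hcont_abs : Continuous fun t => |t| ^ α * fejerKernel n t :=
    ((Real.continuous_rpow_const hα₀).comp continuous_abs).mul (continuous_fejerKernel n)
  have habs : ∫ t in (0)..π, |t| ^ α * fejerKernel n t = ∫ t in (0)..π, t ^ α * fejerKernel n t :=
    intervalIntegral.integral_congr fun t ht => by
      rw [Set.uIcc_of_le pi_pos.le] at ht
      simp only [abs_of_nonneg ht.1]
  rw [integral_neg_self_eq_two_mul_of_even (fun t => by rw [abs_neg, fejerKernel_neg])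
      (hcont_abs.intervalIntegrable _ _),
    habs, ← intervalIntegral.integral_add_adjacent_intervals (b := ((n : ℝ) + 1)⁻¹)
      (hcont.intervalIntegrable _ _) (hcont.intervalIntegrable _ _)]
  linarith [integral_rpow_mul_fejerKernel_near_zero_le n hα₀,
    integral_rpow_mul_fejerKernel_away_from_zero_le n hα₁]

end Moment

lemma continuous_of_dist_le_mul_rpow {X Y : Type*} [PseudoMetricSpace X] [PseudoMetricSpace Y]
    {f : X → Y} {M α : ℝ} (hα : 0 < α) (hf : ∀ x y, dist (f x) (f y) ≤ M * dist x y ^ α) :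
    Continuous f := by
  refine continuous_iff_continuousAt.2 fun x₀ => tendsto_iff_dist_tendsto_zero.2 ?_
  have hlim : Filter.Tendsto (fun x => M * dist x x₀ ^ α) (nhds x₀) (nhds 0) := by
    have := (((continuous_id.dist (continuous_const (y := x₀))).rpow_const
      fun _ => Or.inr hα.le).const_mul M).tendsto x₀
    simpa [Real.zero_rpow hα.ne'] using this
  exact squeeze_zero (fun _ => dist_nonneg) (fun x => hf x x₀) hlim

lemma norm_sub_fejerMean_le_of_holder {f : ℝ → ℝ} {M α : ℝ} (hα₀ : 0 < α) (hα₁ : α < 1)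
    (hM : 0 ≤ M) (hper : Function.Periodic f (2 * π))
    (hf : ∀ x y, |f x - f y| ≤ M * |x - y| ^ α) (n : ℕ) (x : ℝ) :
    ‖(f x : ℂ) - fejerMean n f x‖ ≤ (1 + π ^ 2 / (1 - α)) / π * M * ((n : ℝ) + 1) ^ (-α) := by
  have hcont : Continuous f :=
    continuous_of_dist_le_mul_rpow hα₀ fun x y => by simpa only [Real.dist_eq] using hf x y
  have hpointwise (t : ℝ) :
      |f x - f (x - t)| * fejerKernel n t ≤ M * (|t| ^ α * fejerKernel n t) := by
    rw [← mul_assoc]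
    refine mul_le_mul_of_nonneg_right ?_ (fejerKernel_nonneg n t)
    simpa using hf x (x - t)
  calc ‖(f x : ℂ) - fejerMean n f x‖
      ≤ 1 / (2 * π) * ∫ t in (-π)..π, |f x - f (x - t)| * fejerKernel n t :=
        norm_sub_fejerMean_le (hcont.intervalIntegrable _ _) hper n x
    _ ≤ 1 / (2 * π) * ∫ t in (-π)..π, M * (|t| ^ α * fejerKernel n t) := by
        gcongr
        exact intervalIntegral.integral_mono (by linarith [pi_pos])
          (Continuous.intervalIntegrable (by fun_prop) _ _)
          ((((Real.continuous_rpow_const hα₀.le).comp continuous_abs).mul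
            (continuous_fejerKernel n)).const_mul M |>.intervalIntegrable _ _) hpointwise
    _ = M / (2 * π) * ∫ t in (-π)..π, |t| ^ α * fejerKernel n t := by
        rw [intervalIntegral.integral_const_mul]; ring
    _ ≤ M / (2 * π) * (2 * (1 + π ^ 2 / (1 - α)) * ((n : ℝ) + 1) ^ (-α)) := by
        gcongr
        exact integral_abs_rpow_mul_fejerKernel_le n hα₀.le hα₁
    _ = (1 + π ^ 2 / (1 - α)) / π * M * ((n : ℝ) + 1) ^ (-α) := by
        field_simp

/-- **Bernstein.** If `f` is `2π`-periodic and Hölder of order `α ∈ (0,1)` with constant `M`,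
then the Fejér means approximate `f` uniformly with the rate `C·M·n^{−α}`, where `C`
depends only on `α`. -/
theorem bernstein_fejer_holder (α : ℝ) (hα0 : 0 < α) (hα1 : α < 1) :
    ∃ C : ℝ, ∀ (f : ℝ → ℝ) (M : ℝ), 0 ≤ M →
      Function.Periodic f (2 * Real.pi) →
      (∀ x y : ℝ, |f x - f y| ≤ M * |x - y| ^ α) →
      ∀ n : ℕ, 1 ≤ n → ∀ x : ℝ,
        ‖(f x : ℂ) - fejerMean n f x‖ ≤ C * M * (n : ℝ) ^ (-α) := by
  refine ⟨(1 + π ^ 2 / (1 - α)) / π, fun f M hM hper hf n hn x => ?_⟩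
  have hC : 0 ≤ (1 + π ^ 2 / (1 - α)) / π := by
    have : 0 < 1 - α := by linarith
    positivity
  have hrate : ((n : ℝ) + 1) ^ (-α) ≤ (n : ℝ) ^ (-α) :=
    Real.rpow_le_rpow_of_nonpos (by exact_mod_cast hn) (by linarith) (by linarith)
  exact (norm_sub_fejerMean_le_of_holder hα0 hα1 hM hper hf n x).trans
    (mul_le_mul_of_nonneg_left hrate (mul_nonneg hC hM))
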